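/- (Theorem 2.2, cross-covariance expansion) Fix real numbers a11, a12, a21, a22, σx, σy, R with a22 ≠ 0, R > 0, ã < 0. Let ε₀ > 0 and let a, s̃, e11, e12, e22, e13, e23, e33 : (0, ε₀) → ℝ be bounded functions with a(ε) ≤ 0 and s̃(ε) ≥ 0, such that for each ε: (e11(ε), e12(ε), e22(ε)) solves the two-scale Lyapunov system, and (e13(ε), e23(ε), e33(ε)) solves the filter Lyapunov system with parameters a(ε), s̃(ε) and data (e11(ε), e12(ε)). Then e13(ε) = −s̃(ε)*e11(ε)/(ã*(1 − ε*â)*R + a(ε)*R − s̃(ε)) + O(ε²) as ε → 0⁺. -/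

import Mathlib

/-!
Put `b = a - s̃/R ≤ 0`. Eliminating `e23` between the first two filter equations and then
`e12` with the second Lyapunov equation gives
`R a22 P e13 = -s̃ (a22 N e11 + ε² a12 (a11 e12 + a12 e22))`, where
`P = a22 (ã + b) + ε b (a11 + b)` and `N = a22 + ε b + ε â a22`.
With `D = ã (1 - ε â) + b` one has exactly `P = N D + ε² â ã (a22 â + b)`, so
`e13 + s̃ e11 / (R D)` is `ε²` times an expression in the data, `1/P` and `1/D`.
The data are bounded, and since `ã < 0` and `b ≤ 0`, both `P ≈ a22 (ã + b)` and
`D ≈ ã + b` stay away from zero as `ε → 0⁺`.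
-/

/-- `f = O(ε²)` as `ε → 0⁺`, with the bound holding inside `(0, ε₀)`. -/
def IsO2 (ε₀ : ℝ) (f : ℝ → ℝ) : Prop :=
  ∃ C ε₁ : ℝ, 0 < C ∧ 0 < ε₁ ∧ ε₁ ≤ ε₀ ∧ ∀ ε, 0 < ε → ε < ε₁ → |f ε| ≤ C * ε ^ 2

/-- The two-scale Lyapunov system. -/
def SolvesLyapunov (a11 a12 a21 a22 σx σy ε c11 c12 c22 : ℝ) : Prop :=
  0 = σx ^ 2 + 2 * a11 * c11 + 2 * a12 * c12 ∧
  0 = a11 * c12 + a12 * c22 + c11 * a21 / ε + c12 * a22 / ε ∧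
  0 = σy ^ 2 / ε + 2 * c12 * a21 / ε + 2 * c22 * a22 / ε

/-- The filter Lyapunov system with reduced-filter parameters `a`, `s̃` and
data `(e11, e12)`. -/
def SolvesFilterLyapunov (a11 a12 a21 a22 R ε a stil e11 e12 e13 e23 e33 : ℝ) : Prop :=
  0 = a11 * e13 + a12 * e23 + e13 * (a - stil / R) + e11 * stil / R ∧
  0 = a21 * e13 / ε + a22 * e23 / ε + e23 * (a - stil / R) + e12 * stil / R ∧
  0 = stil ^ 2 / R + 2 * e33 * (a - stil / R) + 2 * e13 * stil / R

open Filter Topology Asymptotics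

section

variable {α E : Type*} {l : Filter α}

lemma boundedAtFilter_of_eventually_norm_le [Norm E] {f : α → E} {M : ℝ}
    (h : ∀ᶠ x in l, ‖f x‖ ≤ M) : BoundedAtFilter l f :=
  IsBigO.of_bound M (h.mono fun x hx => by simpa using hx)

lemma boundedAtFilter_inv_of_eventually_le_norm [NormedDivisionRing E] {f : α → E} {c : ℝ}
    (hc : 0 < c) (h : ∀ᶠ x in l, c ≤ ‖f x‖) : BoundedAtFilter l f⁻¹ :=
  boundedAtFilter_of_eventually_norm_le (M := c⁻¹) <| h.mono fun x hx => by
    simpa [norm_inv] using inv_anti₀ hc hx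

lemma eventually_half_le_norm_of_tendsto_sub [SeminormedAddCommGroup E] {u w : α → E} {c : ℝ}
    (hu : ∀ᶠ x in l, c ≤ ‖u x‖) (hc : 0 < c) (hw : Tendsto (fun x => w x - u x) l (𝓝 0)) :
    ∀ᶠ x in l, c / 2 ≤ ‖w x‖ := by
  filter_upwards [hu, hw.eventually (Metric.closedBall_mem_nhds 0 (half_pos hc))] with x hux hwx
  rw [dist_zero_right] at hwx
  linarith [norm_sub_norm_le (u x) (w x), norm_sub_rev (u x) (w x)]

end

lemma isO2_of_isBigO {ε₀ : ℝ} {f : ℝ → ℝ} (hε₀ : 0 < ε₀)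
    (hf : f =O[𝓝[>] 0] fun ε => ε ^ 2) : IsO2 ε₀ f := by
  obtain ⟨C, hC, hCf⟩ := hf.exists_pos
  obtain ⟨ε₁, hε₁, hsub⟩ := mem_nhdsGT_iff_exists_Ioo_subset.mp hCf.bound
  refine ⟨C, min ε₁ ε₀, hC, lt_min hε₁ hε₀, min_le_right _ _, fun ε hε hεε₁ => ?_⟩
  simpa using hsub ⟨hε, hεε₁.trans_le (min_le_left _ _)⟩

lemma exists_pos_eventually_le_abs_of_nonpos {k t : ℝ} {b h w : ℝ → ℝ} (hk : k ≠ 0) (ht : t < 0)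
    (hb : ∀ᶠ ε in 𝓝[>] 0, b ε ≤ 0) (hh : BoundedAtFilter (𝓝[>] 0) h)
    (hw : ∀ ε, w ε = k * (t + b ε) + ε * h ε) :
    ∃ c > 0, ∀ᶠ ε in 𝓝[>] 0, c ≤ |w ε| := by
  have hc : 0 < |k| * -t := mul_pos (abs_pos.mpr hk) (neg_pos.mpr ht)
  have hε : ZeroAtFilter (𝓝[>] (0 : ℝ)) id := tendsto_nhdsWithin_of_tendsto_nhds tendsto_id
  refine ⟨_, half_pos hc, eventually_half_le_norm_of_tendsto_sub (u := fun ε => k * (t + b ε))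
    (hb.mono fun ε hbε => ?_) hc ((hε.mul_boundedAtFilter hh).congr fun ε => by simp [hw])⟩
  rw [Real.norm_eq_abs, abs_mul, abs_of_neg (by linarith : t + b ε < 0)]
  gcongr
  linarith

lemma e13_add_div_eq_sq_mul {a11 a12 a21 a22 σx σy R ε a s e11 e12 e22 e13 e23 e33 ã â b P D : ℝ}
    (ha22 : a22 ≠ 0) (hR : R ≠ 0) (hε : ε ≠ 0)
    (hã : ã = a11 - a12 * a21 / a22) (hâ : â = a12 * a21 / a22 ^ 2) (hb : b = a - s / R)
    (hP : P = a22 * (ã + b) + ε * (b * (a11 + b))) (hD : D = ã + b - ε * (ã * â))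
    (hP0 : P ≠ 0) (hD0 : D ≠ 0)
    (hlyap : SolvesLyapunov a11 a12 a21 a22 σx σy ε e11 e12 e22)
    (hfilt : SolvesFilterLyapunov a11 a12 a21 a22 R ε a s e11 e12 e13 e23 e33) :
    e13 + s * e11 / (ã * (1 - ε * â) * R + a * R - s) =
      ε ^ 2 * (R⁻¹ * s * (e11 * (â * ã * (a22 * â + b)) * P⁻¹ * D⁻¹
        - a12 / a22 * (a11 * e12 + a12 * e22) * P⁻¹)) := by
  obtain ⟨-, hl, -⟩ := hlyap
  obtain ⟨hf1, hf2, -⟩ := hfilt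
  have hK : ã * (1 - ε * â) * R + a * R - s = R * D := by
    rw [hD, hb]; field_simp; ring
  have hl' : e12 * a22 = -(e11 * a21 + ε * (a11 * e12 + a12 * e22)) := by
    field_simp at hl; linear_combination -hl
  have hf1' : R * ((a11 + b) * e13 + a12 * e23) = -(e11 * s) := by
    rw [hb]; field_simp at hf1 ⊢; linear_combination -hf1
  have hf2' : R * (a21 * e13 + (a22 + ε * b) * e23) = -(ε * e12 * s) := by
    rw [hb]; field_simp at hf2 ⊢; linear_combination -hf2
  have h13 : R * a22 * P * e13 =
      -(s * (e11 * a22 * (a22 + ε * b + ε * â * a22) + ε ^ 2 * a12 * (a11 * e12 + a12 * e22))) := by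
    rw [hP, hã, hâ]
    field_simp
    linear_combination a22 * ((a22 + ε * b) * hf1' - a12 * hf2') + a12 * ε * s * hl'
  have hPD : P = (a22 + ε * b + ε * â * a22) * D + ε ^ 2 * (â * ã * (a22 * â + b)) := by
    rw [hP, hD, hã, hâ]; field_simp; ring
  rw [hK]
  field_simp
  linear_combination D * h13 + s * e11 * a22 * hPD

lemma e13_add_div_isBigO_sq {a11 a12 a21 a22 σx σy R : ℝ} {a stil e11 e12 e22 e13 e23 e33 : ℝ → ℝ}
    (ha22 : a22 ≠ 0) (hR : 0 < R) (hat : a11 - a12 * a21 / a22 < 0)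
    (ha_bdd : BoundedAtFilter (𝓝[>] 0) a) (hstil_bdd : BoundedAtFilter (𝓝[>] 0) stil)
    (he11 : BoundedAtFilter (𝓝[>] 0) e11) (he12 : BoundedAtFilter (𝓝[>] 0) e12)
    (he22 : BoundedAtFilter (𝓝[>] 0) e22)
    (ha : ∀ᶠ ε in 𝓝[>] 0, a ε ≤ 0) (hstil : ∀ᶠ ε in 𝓝[>] 0, 0 ≤ stil ε)
    (hlyap : ∀ᶠ ε in 𝓝[>] 0, SolvesLyapunov a11 a12 a21 a22 σx σy ε (e11 ε) (e12 ε) (e22 ε))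
    (hfilt : ∀ᶠ ε in 𝓝[>] 0, SolvesFilterLyapunov a11 a12 a21 a22 R ε (a ε) (stil ε)
        (e11 ε) (e12 ε) (e13 ε) (e23 ε) (e33 ε)) :
    (fun ε => e13 ε + stil ε * e11 ε /
        ((a11 - a12 * a21 / a22) * (1 - ε * (a12 * a21 / a22 ^ 2)) * R + a ε * R - stil ε))
      =O[𝓝[>] 0] fun ε => ε ^ 2 := by
  set ã := a11 - a12 * a21 / a22
  set â := a12 * a21 / a22 ^ 2
  set b : ℝ → ℝ := fun ε => a ε - stil ε / R
  set P : ℝ → ℝ := fun ε => a22 * (ã + b ε) + ε * (b ε * (a11 + b ε))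
  set D : ℝ → ℝ := fun ε => ã + b ε - ε * (ã * â)
  have hb_bdd : BoundedAtFilter (𝓝[>] 0) b :=
    (ha_bdd.sub (hstil_bdd.const_mul_left R⁻¹)).congr_left fun ε => by simp only [b]; ring
  have hb_nonpos : ∀ᶠ ε in 𝓝[>] 0, b ε ≤ 0 := by
    filter_upwards [ha, hstil] with ε haε hstilε
    linarith [div_nonneg hstilε hR.le]
  obtain ⟨cP, hcP, hP⟩ := exists_pos_eventually_le_abs_of_nonpos (w := P) ha22 hat hb_nonpos
    (hb_bdd.mul ((const_boundedAtFilter _ a11).add hb_bdd)) fun ε => rfl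
  obtain ⟨cD, hcD, hD⟩ := exists_pos_eventually_le_abs_of_nonpos (w := D) one_ne_zero hat
    hb_nonpos (const_boundedAtFilter _ (-(ã * â))) fun ε => by
      simp only [D, Function.const_apply]; ring
  have hP_inv := boundedAtFilter_inv_of_eventually_le_norm (f := P) hcP hP
  have hD_inv := boundedAtFilter_inv_of_eventually_le_norm (f := D) hcD hD
  have hrem : BoundedAtFilter (𝓝[>] 0) fun ε => R⁻¹ * stil ε *
      (e11 ε * (â * ã * (a22 * â + b ε)) * (P ε)⁻¹ * (D ε)⁻¹
        - a12 / a22 * (a11 * e12 ε + a12 * e22 ε) * (P ε)⁻¹) :=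
    ((const_boundedAtFilter _ R⁻¹).mul hstil_bdd).mul
      ((((he11.mul ((const_boundedAtFilter _ (â * ã)).mul
          ((const_boundedAtFilter _ (a22 * â)).add hb_bdd))).mul hP_inv).mul hD_inv).sub
        (((const_boundedAtFilter _ (a12 / a22)).mul
          ((he12.const_mul_left a11).add (he22.const_mul_left a12))).mul hP_inv))
  refine ((isBigO_refl (fun ε : ℝ => ε ^ 2) _).mul hrem).congr' ?_ (by simp)
  filter_upwards [self_mem_nhdsWithin, hlyap, hfilt, hP, hD] with ε hε hlε hfε hPε hDε
  exact (e13_add_div_eq_sq_mul ha22 hR.ne' (ne_of_gt hε) rfl rfl rfl rfl rfl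
    (abs_pos.mp (hcP.trans_le hPε)) (abs_pos.mp (hcD.trans_le hDε)) hlε hfε).symm

theorem stmt8 (a11 a12 a21 a22 σx σy R : ℝ) (ha22 : a22 ≠ 0) (hR : 0 < R)
    (hat : a11 - a12 * a21 / a22 < 0)
    (ε₀ : ℝ) (hε₀ : 0 < ε₀)
    (a stil e11 e12 e22 e13 e23 e33 : ℝ → ℝ)
    (hbdd : ∃ M : ℝ, ∀ ε, 0 < ε → ε < ε₀ →
      |a ε| ≤ M ∧ |stil ε| ≤ M ∧ |e11 ε| ≤ M ∧ |e12 ε| ≤ M ∧ |e22 ε| ≤ M ∧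
      |e13 ε| ≤ M ∧ |e23 ε| ≤ M ∧ |e33 ε| ≤ M)
    (ha : ∀ ε, 0 < ε → ε < ε₀ → a ε ≤ 0)
    (hstil : ∀ ε, 0 < ε → ε < ε₀ → 0 ≤ stil ε)
    (hlyap : ∀ ε, 0 < ε → ε < ε₀ →
      SolvesLyapunov a11 a12 a21 a22 σx σy ε (e11 ε) (e12 ε) (e22 ε))
    (hfilt : ∀ ε, 0 < ε → ε < ε₀ →
      SolvesFilterLyapunov a11 a12 a21 a22 R ε (a ε) (stil ε)
        (e11 ε) (e12 ε) (e13 ε) (e23 ε) (e33 ε)) :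
    IsO2 ε₀ (fun ε =>
      e13 ε +
        stil ε * e11 ε /
          ((a11 - a12 * a21 / a22) * (1 - ε * (a12 * a21 / a22 ^ 2)) * R
            + a ε * R - stil ε)) := by
  obtain ⟨M, hM⟩ := hbdd
  have near {p : ℝ → Prop} (h : ∀ ε, 0 < ε → ε < ε₀ → p ε) : ∀ᶠ ε in 𝓝[>] 0, p ε :=
    mem_of_superset (Ioo_mem_nhdsGT hε₀) fun ε hε => h ε hε.1 hε.2
  have bdd {f : ℝ → ℝ} (h : ∀ ε, 0 < ε → ε < ε₀ → |f ε| ≤ M) : BoundedAtFilter (𝓝[>] 0) f :=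
    boundedAtFilter_of_eventually_norm_le (near h)
  exact isO2_of_isBigO hε₀ <| e13_add_div_isBigO_sq ha22 hR hat
    (bdd fun ε h h' => (hM ε h h').1) (bdd fun ε h h' => (hM ε h h').2.1)
    (bdd fun ε h h' => (hM ε h h').2.2.1) (bdd fun ε h h' => (hM ε h h').2.2.2.1)
    (bdd fun ε h h' => (hM ε h h').2.2.2.2.1) (near ha) (near hstil) (near hlyap) (near hfilt)
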